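/- Proposition 3 (impossibility of representation-window-based decision rules): consider the family of branch MDPs indexed by β ∈ {true, false}, where in instance β the terminal reward 1 is earned at the end of the u-branch (action L) if β = true and at the end of the v-branch (action R) if β = false, with all transitions and other rewards unchanged. For any representation φ satisfying the aliasing condition φ(u_t) = φ(v_t) for all t = 1,…,H, the observable represented window data is identical in both instances and under both initial actions. Therefore, for every decision rule D mapping such window data to an action in {L, R}, there exists β ∈ {true, false} such that in instance β the action selected by D achieves full-horizon return 0 while the other action achieves return 1. -/

import Mathlib

/-!
Proposition 3 (impossibility of representation-window-based decision rules):
a family of branch MDPs indexed by `β : Bool`, where the terminal reward `1` is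
earned at the end of the `u`-branch (action `L`) if `β = true` and at the end of
the `v`-branch (action `R`) if `β = false`.  Actions are encoded by `Bool`
(`true ↦ L`, `false ↦ R`).
-/

/-- States of the branch MDP. -/
inductive BState : Type where
  | s0 : BState
  | u : ℕ → BState
  | v : ℕ → BState
  | g : BState
  | b : BState
deriving DecidableEq

/-- Trajectory induced by an initial action `a : Bool` (`true ↦ L`); it does not
depend on the instance `β`. -/
def traj (H : ℕ) (a : Bool) (t : ℕ) : BState :=
  if t = 0 then .s0
  else if t ≤ H + 1 then (if a then .u t else .v t)
  else (if a then .g else .b)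

/-- Reward at step `t` in instance `β` under initial action `a`: the final
transition (step `H+1`) carries reward `1` exactly when it enters the rewarded
terminal, i.e. when `a = β`; all other rewards are `0`. -/
def rew (H : ℕ) (β a : Bool) (t : ℕ) : ℝ :=
  if t = H + 1 ∧ a = β then 1 else 0

/-- Full-horizon return in instance `β` under initial action `a`. -/
def ret (H : ℕ) (β a : Bool) : ℝ := ∑ t ∈ Finset.range (H + 2), rew H β a t

/-- The observable represented window data of a trajectory under representation
`φ`: the block starting at time `t` (observable iff `1 ≤ t` and `t + H − 1 ≤ H`)
with entries `φ(τ(t+j))` for `j < H`; all observable windows lie within times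
`1, …, H`. -/
def obs (H : ℕ) {X : Type*} (φ : BState → X) (τ : ℕ → BState) :
    ℕ → ℕ → Option X :=
  fun t j => if 1 ≤ t ∧ t + H - 1 ≤ H ∧ j < H then some (φ (τ (t + j))) else none

lemma traj_of_pos_of_le {H t : ℕ} (a : Bool) (ht₀ : 1 ≤ t) (htH : t ≤ H + 1) :
    traj H a t = if a then .u t else .v t := by
  rw [traj, if_neg (by omega), if_pos htH]

lemma comp_traj_eq_of_aliased {H t : ℕ} {X : Type*} {φ : BState → X}
    (halias : ∀ t, 1 ≤ t → t ≤ H → φ (.u t) = φ (.v t)) (ht₀ : 1 ≤ t) (htH : t ≤ H)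
    (a a' : Bool) : φ (traj H a t) = φ (traj H a' t) := by
  rw [traj_of_pos_of_le a ht₀ (by omega), traj_of_pos_of_le a' ht₀ (by omega)]
  cases a <;> cases a' <;> simp [halias t ht₀ htH]

-- Every observable window starts at time `1`, so it only sees the aliased times `1, …, H`.
lemma obs_traj_eq_of_aliased {H : ℕ} {X : Type*} {φ : BState → X}
    (halias : ∀ t, 1 ≤ t → t ≤ H → φ (.u t) = φ (.v t)) (a a' : Bool) :
    obs H φ (traj H a) = obs H φ (traj H a') := by
  funext t j
  simp only [obs]
  split_ifs with hwin
  · rw [comp_traj_eq_of_aliased halias (by omega) (by omega) a a']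
  · rfl

lemma ret_eq_ite (H : ℕ) (β a : Bool) : ret H β a = if a = β then 1 else 0 := by
  by_cases h : a = β <;> simp [ret, rew, h]

lemma ret_self (H : ℕ) (β : Bool) : ret H β β = 1 := by
  simp [ret_eq_ite]

lemma ret_of_ne {H : ℕ} {β a : Bool} (h : a ≠ β) : ret H β a = 0 := by
  simp [ret_eq_ite, h]

theorem branch_decision_rule_impossibility_general (H : ℕ)
    {X : Type*} (φ : BState → X)
    (halias : ∀ t, 1 ≤ t → t ≤ H → φ (.u t) = φ (.v t)) :
    (∀ a a' : Bool, obs H φ (traj H a) = obs H φ (traj H a')) ∧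
    (∀ D : (ℕ → ℕ → Option X) → Bool, ∃ β : Bool,
      ret H β (D (obs H φ (traj H true))) = 0 ∧
      ret H β (!(D (obs H φ (traj H true)))) = 1) := by
  refine ⟨obs_traj_eq_of_aliased halias, fun D => ?_⟩
  set c := D (obs H φ (traj H true))
  exact ⟨!c, ret_of_ne (Bool.not_ne_self c).symm, ret_self H (!c)⟩

/-- **Proposition 3, impossibility form.** For any representation
`φ` satisfying the aliasing condition `φ(u_t) = φ(v_t)` for `t = 1,…,H`, the
observable represented window data is identical in both instances and under both
initial actions.  Therefore, for every decision rule `D` mapping such window data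
to an action, there exists an instance `β` in which the action selected by `D`
achieves full-horizon return `0` while the other action achieves return `1`. -/
theorem branch_decision_rule_impossibility (H : ℕ) (hH : 1 ≤ H)
    {X : Type*} (φ : BState → X)
    (halias : ∀ t, 1 ≤ t → t ≤ H → φ (.u t) = φ (.v t)) :
    (∀ a a' : Bool, obs H φ (traj H a) = obs H φ (traj H a')) ∧
    (∀ D : (ℕ → ℕ → Option X) → Bool, ∃ β : Bool,
      ret H β (D (obs H φ (traj H true))) = 0 ∧
      ret H β (!(D (obs H φ (traj H true)))) = 1) :=
  branch_decision_rule_impossibility_general H φ halias
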